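/- Let μ = (μ₁, …, μ_r) be a partition and q, z, u indeterminates. Then ∏_{b ∈ μ} ((u - z^{-1} q^{-2(c(b)-1)})(u - z^{-1} q^{-2(c(b)+1)})) / ((u - z^{-1} q^{-2c(b)})²) = ((u - z^{-1} q^{2r})/(u - z^{-1})) · ∏_{i=1}^{r} (u - z^{-1} q^{-2(μᵢ - i + 1)})/(u - z^{-1} q^{-2(μᵢ - i)}), where c(b) = j - i is the content of box b = (i,j). -/
import Mathlib


noncomputable section

/-- The field `ℚ(q, z, u)` of rational functions in three indeterminates. -/
abbrev K2 : Type := FractionRing (MvPolynomial (Fin 3) ℚ)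

/-- The indeterminate `q`. -/
noncomputable def qq : K2 := algebraMap (MvPolynomial (Fin 3) ℚ) K2 (MvPolynomial.X 0)

/-- The indeterminate `z`. -/
noncomputable def zz : K2 := algebraMap (MvPolynomial (Fin 3) ℚ) K2 (MvPolynomial.X 1)

/-- The indeterminate `u`. -/
noncomputable def uu : K2 := algebraMap (MvPolynomial (Fin 3) ℚ) K2 (MvPolynomial.X 2)

noncomputable def FF (c : ℤ) : K2 := uu - zz⁻¹ * qq ^ (-2 * c)

lemma algmap_inj : Function.Injective (algebraMap (MvPolynomial (Fin 3) ℚ) K2) :=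
  IsFractionRing.injective _ _

lemma zz_ne : zz ≠ 0 := by
  rw [zz]
  intro h
  have := algmap_inj (h.trans (map_zero _).symm)
  simpa using congrArg (MvPolynomial.eval fun _ => (1 : ℚ)) this

lemma qq_ne : qq ≠ 0 := by
  rw [qq]
  intro h
  have := algmap_inj (h.trans (map_zero _).symm)
  simpa using congrArg (MvPolynomial.eval fun _ => (1 : ℚ)) this

lemma key (e : ℤ) : uu * zz ≠ qq ^ e := by
  intro h
  rcases le_or_gt 0 e with he | he
  · lift e to ℕ using he
    rw [zpow_natCast, uu, zz, qq, ← map_pow, ← map_mul] at h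
    have := algmap_inj h
    have := congrArg (MvPolynomial.eval fun i => if i = 1 then (3:ℚ) else 1) this
    simp at this
  · have h2 : uu * zz * qq ^ ((-e).toNat) = 1 := by
      have : qq ^ e = (qq ^ ((-e).toNat))⁻¹ := by
        rw [← zpow_natCast, Int.toNat_of_nonneg (by omega), ← zpow_neg, neg_neg]
      rw [this] at h
      rw [h, inv_mul_cancel₀ (pow_ne_zero _ qq_ne)]
    rw [uu, zz, qq, ← map_pow, ← map_mul, ← map_mul, show (1:K2) = algebraMap (MvPolynomial (Fin 3) ℚ) K2 1 from (map_one _).symm] at h2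
    have := algmap_inj h2
    have := congrArg (MvPolynomial.eval fun i => if i = 1 then (3:ℚ) else 1) this
    simp at this

lemma FF_ne (c : ℤ) : FF c ≠ 0 := by
  rw [FF]
  intro h
  have h1 : uu * zz = qq ^ (-2 * c) := by
    have : uu = zz⁻¹ * qq ^ (-2 * c) := by linear_combination h
    rw [this, mul_comm zz⁻¹, mul_assoc, inv_mul_cancel₀ zz_ne, mul_one]
  exact key _ h1

lemma row (i : ℤ) (m : ℕ) :
    ∏ j ∈ Finset.range m, (FF ((j:ℤ) - i - 1) * FF ((j:ℤ) - i + 1)) / (FF ((j:ℤ) - i)) ^ 2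
    = (FF (-i - 1) * FF ((m:ℤ) - i)) / (FF (-i) * FF ((m:ℤ) - i - 1)) := by
  induction m with
  | zero =>
    simp only [Finset.range_zero, Finset.prod_empty, Nat.cast_zero]
    rw [eq_div_iff (by exact mul_ne_zero (FF_ne _) (FF_ne _))]
    ring
  | succ m ih =>
    rw [Finset.prod_range_succ, ih]
    push_cast
    have h1 := FF_ne (-i)
    have h2 := FF_ne ((m:ℤ) - i - 1)
    have h3 := FF_ne ((m:ℤ) - i)
    have h4 := FF_ne ((m:ℤ) + 1 - i - 1)
    field_simp
    ring_nf

lemma col (r : ℕ) :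
    ∏ i ∈ Finset.range r, FF (-(i:ℤ) - 1) / FF (-(i:ℤ)) = FF (-(r:ℤ)) / FF 0 := by
  induction r with
  | zero => simp [div_self (FF_ne 0)]
  | succ r ih =>
    rw [Finset.prod_range_succ, ih]
    push_cast
    have h1 := FF_ne 0
    have h2 := FF_ne (-(r:ℤ))
    have h3 := FF_ne (-((r:ℤ)+1))
    field_simp
    ring

/-- For a partition `μ` with at most `r` rows (boxes `(i,j)` 0-indexed,
content `c = j - i`), in `ℚ(q,z,u)`:
`∏_{b∈μ} ((u - z⁻¹ q^{-2(c-1)})(u - z⁻¹ q^{-2(c+1)}))/((u - z⁻¹ q^{-2c})²)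
 = ((u - z⁻¹ q^{2r})/(u - z⁻¹)) · ∏_{i=1}^r (u - z⁻¹ q^{-2(μᵢ-i+1)})/(u - z⁻¹ q^{-2(μᵢ-i)})`,
where in the 0-indexed product `μᵢ - i` (1-indexed) is `(μ i : ℤ) - i - 1`. -/
theorem stmt2 (r : ℕ) (μ : Fin r → ℕ)
    (hμ : ∀ i j : Fin r, i ≤ j → μ j ≤ μ i) :
    (∏ i : Fin r, ∏ j ∈ Finset.range (μ i),
      ((uu - zz⁻¹ * qq ^ (-2 * (((j : ℤ) - ((i : ℕ) : ℤ)) - 1))) *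
       (uu - zz⁻¹ * qq ^ (-2 * (((j : ℤ) - ((i : ℕ) : ℤ)) + 1)))) /
      ((uu - zz⁻¹ * qq ^ (-2 * ((j : ℤ) - ((i : ℕ) : ℤ)))) ^ 2))
    = ((uu - zz⁻¹ * qq ^ (2 * (r : ℤ))) / (uu - zz⁻¹)) *
      ∏ i : Fin r,
        (uu - zz⁻¹ * qq ^ (-2 * (((μ i : ℤ) - ((i : ℕ) : ℤ) - 1) + 1))) /
        (uu - zz⁻¹ * qq ^ (-2 * ((μ i : ℤ) - ((i : ℕ) : ℤ) - 1))) := by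
  have lhs_eq : (∏ i : Fin r, ∏ j ∈ Finset.range (μ i),
      ((uu - zz⁻¹ * qq ^ (-2 * (((j : ℤ) - ((i : ℕ) : ℤ)) - 1))) *
       (uu - zz⁻¹ * qq ^ (-2 * (((j : ℤ) - ((i : ℕ) : ℤ)) + 1)))) /
      ((uu - zz⁻¹ * qq ^ (-2 * ((j : ℤ) - ((i : ℕ) : ℤ)))) ^ 2))
      = ∏ i : Fin r, (FF (-((i:ℕ):ℤ) - 1) / FF (-((i:ℕ):ℤ))) *
          (FF ((μ i : ℤ) - ((i:ℕ):ℤ)) / FF ((μ i : ℤ) - ((i:ℕ):ℤ) - 1)) := by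
    refine Finset.prod_congr rfl fun i _ => ?_
    have := row ((i:ℕ):ℤ) (μ i)
    rw [show (∏ j ∈ Finset.range (μ i),
      ((uu - zz⁻¹ * qq ^ (-2 * (((j : ℤ) - ((i : ℕ) : ℤ)) - 1))) *
       (uu - zz⁻¹ * qq ^ (-2 * (((j : ℤ) - ((i : ℕ) : ℤ)) + 1)))) /
      ((uu - zz⁻¹ * qq ^ (-2 * ((j : ℤ) - ((i : ℕ) : ℤ)))) ^ 2))
      = ∏ j ∈ Finset.range (μ i),
        (FF ((j:ℤ) - ((i:ℕ):ℤ) - 1) * FF ((j:ℤ) - ((i:ℕ):ℤ) + 1)) /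
          (FF ((j:ℤ) - ((i:ℕ):ℤ))) ^ 2 from rfl, this]
    rw [div_mul_div_comm]
  rw [lhs_eq, Finset.prod_mul_distrib]
  have c1 : (∏ i : Fin r, FF (-((i:ℕ):ℤ) - 1) / FF (-((i:ℕ):ℤ)))
      = (uu - zz⁻¹ * qq ^ (2 * (r : ℤ))) / (uu - zz⁻¹) := by
    rw [Fin.prod_univ_eq_prod_range (fun i => FF (-((i:ℕ):ℤ) - 1) / FF (-((i:ℕ):ℤ))) r, col]
    rw [FF, FF, show (-2:ℤ) * -(r:ℤ) = 2 * r by ring]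
    norm_num
  have c2 : (∏ i : Fin r, FF ((μ i : ℤ) - ((i:ℕ):ℤ)) / FF ((μ i : ℤ) - ((i:ℕ):ℤ) - 1))
      = ∏ i : Fin r,
        (uu - zz⁻¹ * qq ^ (-2 * (((μ i : ℤ) - ((i : ℕ) : ℤ) - 1) + 1))) /
        (uu - zz⁻¹ * qq ^ (-2 * ((μ i : ℤ) - ((i : ℕ) : ℤ) - 1))) := by
    refine Finset.prod_congr rfl fun i _ => ?_
    rw [FF, FF, show ((μ i : ℤ) - ((i:ℕ):ℤ) - 1) + 1 = (μ i : ℤ) - ((i:ℕ):ℤ) by ring]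
  rw [← c2, c1]


end
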